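/- Consumption followed by production with post-stores: for every assertion a, store s, and family of mutators C(−, −) parameterized by two stores, the mutator (s₁ ← with(s, consume(a); store); s₂ ← with(s, produce(a); store); C(s₁, s₂)) covers the mutator ⨁ s'. C(s', s'), i.e. consuming a and then producing a starting from the same store s and then running C on the two resulting post-stores safely approximates leaving the heap unchanged and angelically picking a single store s' used for both parameters of C. -/

import Mathlib

/- ## Outcomes, satisfaction, coverage, sequential composition -/

/-- An outcome over state space `S` with answers in `A`: a singleton, a demonic
choice over a family of outcomes, or an angelic choice over a family of outcomes. -/
inductive Outcome (S : Type) (A : Type) : Type 1 where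
  | single (σ : S) (a : A)
  | demonic (I : Type) (f : I → Outcome S A)
  | angelic (I : Type) (f : I → Outcome S A)

namespace Outcome

/-- Satisfaction of a postcondition by an outcome. -/
def sat {S A : Type} : Outcome S A → (S → A → Prop) → Prop
  | single σ a, Q => Q σ a
  | demonic _ f, Q => ∀ i, (f i).sat Q
  | angelic _ f, Q => ∃ i, (f i).sat Q

/-- Coverage of outcomes: `φ` covers `φ'` iff every postcondition satisfied by `φ`
is satisfied by `φ'`. -/
def cover {S A : Type} (φ φ' : Outcome S A) : Prop :=
  ∀ Q : S → A → Prop, φ.sat Q → φ'.sat Q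

/-- Sequential composition (with answers) of an outcome with an answer-indexed
family of mutators. -/
def bind {S A S' B : Type} : Outcome S A → (A → S → Outcome S' B) → Outcome S' B
  | single σ a, C => C a σ
  | demonic I f, C => demonic I (fun i => (f i).bind C)
  | angelic I f, C => angelic I (fun i => (f i).bind C)

end Outcome

/-- Failure: the angelic choice over zero alternatives. -/
def failO {S A : Type} : Outcome S A := .angelic PEmpty (fun x => x.elim)
/-- Nontermination: the demonic choice over zero alternatives. -/
def blockO {S A : Type} : Outcome S A := .demonic PEmpty (fun x => x.elim)
/-- Angelic guard: `⨁ P. φ`. -/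
def aguard {S A : Type} (P : Prop) (φ : Outcome S A) : Outcome S A :=
  .angelic (PLift P) (fun _ => φ)
/-- Demonic guard: `⨂ P. φ`. -/
def dguard {S A : Type} (P : Prop) (φ : Outcome S A) : Outcome S A :=
  .demonic (PLift P) (fun _ => φ)
/-- Binary demonic choice of outcomes. -/
def dchoiceO {S A : Type} (φ₁ φ₂ : Outcome S A) : Outcome S A :=
  .demonic Bool (fun t => if t then φ₁ else φ₂)

/-- Sequential composition of an answer-free outcome with a mutator: `φ; C`. -/
def oseq {S S' : Type} (φ : Outcome S Unit) (C : S → Outcome S' Unit) : Outcome S' Unit :=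
  φ.bind (fun _ => C)

/-- Sequential composition of mutators with answers: `x ← C; C'(x)`. -/
def mbind {S S' S'' A B : Type} (C : S → Outcome S' A) (C' : A → S' → Outcome S'' B) :
    S → Outcome S'' B :=
  fun σ => (C σ).bind C'

/-- Sequential composition `C; C'` where the first mutator is answer-free. -/
def mthen {S S' S'' A : Type} (C : S → Outcome S' Unit) (C' : S' → Outcome S'' A) :
    S → Outcome S'' A :=
  fun σ => (C σ).bind (fun _ => C')

/-- Side-effect-only sequential composition `C ;, C'`: run `C`, then `C'`, and keep
`C`'s answer. -/
def msideSeq {S S' S'' A : Type} (C : S → Outcome S' A) (C' : S' → Outcome S'' Unit) :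
    S → Outcome S'' A :=
  fun σ => (C σ).bind (fun a σ' => (C' σ').bind (fun _ σ'' => .single σ'' a))

/-- Coverage of mutators, lifted pointwise from coverage of outcomes. -/
def mcover {S S' A : Type} (C C' : S → Outcome S' A) : Prop :=
  ∀ σ, (C σ).cover (C' σ)

/-- Binary demonic choice of mutators. -/
def mdchoice {S S' A : Type} (C₁ C₂ : S → Outcome S' A) : S → Outcome S' A :=
  fun σ => dchoiceO (C₁ σ) (C₂ σ)

/- ## Syntax of the programming language and of assertions; semiconcrete states -/

/-- Integer expressions. -/
inductive IExp (V : Type) where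
  | lit (z : ℤ)
  | var (x : V)
  | add (e₁ e₂ : IExp V)
  | sub (e₁ e₂ : IExp V)

/-- Boolean expressions. -/
inductive BExp (V : Type) where
  | eq (e₁ e₂ : IExp V)
  | lt (e₁ e₂ : IExp V)
  | not (b : BExp V)

/-- Evaluation of an integer expression under a store. -/
def IExp.eval {V : Type} (s : V → ℤ) : IExp V → ℤ
  | .lit z => z
  | .var x => s x
  | .add e₁ e₂ => e₁.eval s + e₂.eval s
  | .sub e₁ e₂ => e₁.eval s - e₂.eval s

/-- Evaluation of a boolean expression under a store. -/
def BExp.eval {V : Type} (s : V → ℤ) : BExp V → Bool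
  | .eq e₁ e₂ => decide (e₁.eval s = e₂.eval s)
  | .lt e₁ e₂ => decide (e₁.eval s < e₂.eval s)
  | .not b => !(b.eval s)

/-- Predicate names: the built-in points-to and malloc-block predicates, plus
user-defined predicates drawn from `P`. -/
inductive PredName (P : Type) where
  | pts
  | mb
  | user (q : P)
deriving DecidableEq

/-- A chunk `p(v̄)`: a predicate name together with its integer arguments. -/
abbrev Chunk (P : Type) := PredName P × List ℤ

/-- A heap: a multiset of chunks. -/
abbrev Heap (P : Type) := Multiset (Chunk P)

/-- A (semiconcrete) state: a store paired with a heap. -/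
abbrev SCState (V P : Type) := (V → ℤ) × Heap P

/-- Function update `f[x := v]`. -/
def updF {V α : Type} [DecidableEq V] (s : V → α) (x : V) (v : α) : V → α :=
  fun y => if y = x then v else s y

/-- Function update by lists, `f[x̄ := v̄]`. -/
def updsF {V α : Type} [DecidableEq V] : (V → α) → List V → List α → (V → α)
  | s, [], _ => s
  | s, _ :: _, [] => s
  | s, x :: xs, v :: vs => updsF (updF s x v) xs vs

/-- Assertions: boolean expressions, predicate assertions with variable patterns,
separating conjunction, and conditional assertions. -/
inductive Assn (V P : Type) where
  | bexp (b : BExp V)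
  | pred (p : PredName P) (es : List (IExp V)) (xs : List V)
  | star (a₁ a₂ : Assn V P)
  | ite (b : BExp V) (a₁ a₂ : Assn V P)

/- ## Semiconcrete auxiliary mutators; assertion consumption and production -/

/-- `assume(b)`: blocks unless `b` evaluates to true. -/
def assumeB {V P : Type} (b : BExp V) : SCState V P → Outcome (SCState V P) Unit :=
  fun σ => dguard (b.eval σ.1 = true) (.single σ ())

/-- `assert(b)`: fails unless `b` evaluates to true. -/
def assertB {V P : Type} (b : BExp V) : SCState V P → Outcome (SCState V P) Unit :=
  fun σ => aguard (b.eval σ.1 = true) (.single σ ())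

/-- Semiconcrete consumption of a multiset of chunks. -/
def consumeChunks {V P : Type} [DecidableEq P] (h' : Heap P) :
    SCState V P → Outcome (SCState V P) Unit :=
  fun σ => aguard (h' ≤ σ.2) (.single (σ.1, σ.2 - h') ())

/-- Semiconcrete consumption of a single chunk. -/
def consumeChunk {V P : Type} [DecidableEq P] (α : Chunk P) :
    SCState V P → Outcome (SCState V P) Unit :=
  consumeChunks (α ::ₘ 0)

/-- Semiconcrete production of a multiset of chunks. -/
def produceChunks {V P : Type} (h' : Heap P) :
    SCState V P → Outcome (SCState V P) Unit :=
  fun σ => .single (σ.1, σ.2 + h') ()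

/-- Semiconcrete production of a single chunk. -/
def produceChunk {V P : Type} (α : Chunk P) :
    SCState V P → Outcome (SCState V P) Unit :=
  produceChunks (α ::ₘ 0)

/-- The leak check: fails if the heap is nonempty, blocks otherwise. -/
def leakcheck {V P : Type} : SCState V P → Outcome (SCState V P) Unit :=
  fun σ => aguard (σ.2 = 0) blockO

/-- The mutator that answers the current store. -/
def storeM {V P : Type} : SCState V P → Outcome (SCState V P) (V → ℤ) :=
  fun σ => .single σ σ.1

/-- `with(s', C)`: run `C` under store `s'`, then restore the original store,
answering `C`'s answer. -/
def withS {V P A : Type} (s' : V → ℤ) (C : SCState V P → Outcome (SCState V P) A) :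
    SCState V P → Outcome (SCState V P) A :=
  fun σ => (C (s', σ.2)).bind (fun a σ' => .single (σ.1, σ'.2) a)

/-- The mutator that does nothing. -/
def noop {V P : Type} : SCState V P → Outcome (SCState V P) Unit :=
  fun σ => .single σ ()

/-- Consumption of an assertion. -/
def consume {V P : Type} [DecidableEq V] [DecidableEq P] :
    Assn V P → SCState V P → Outcome (SCState V P) Unit
  | .bexp b => assertB b
  | .pred p es xs => fun σ =>
      .angelic {vs : List ℤ // vs.length = xs.length} (fun vs =>
        (consumeChunk (p, es.map (IExp.eval σ.1) ++ vs.1) σ).bind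
          (fun _ σ' => .single (updsF σ'.1 xs vs.1, σ'.2) ()))
  | .star a₁ a₂ => mthen (consume a₁) (consume a₂)
  | .ite b a₁ a₂ =>
      mdchoice (mthen (assumeB b) (consume a₁)) (mthen (assumeB (.not b)) (consume a₂))

/-- Production of an assertion. -/
def produce {V P : Type} [DecidableEq V] [DecidableEq P] :
    Assn V P → SCState V P → Outcome (SCState V P) Unit
  | .bexp b => assumeB b
  | .pred p es xs => fun σ =>
      .demonic {vs : List ℤ // vs.length = xs.length} (fun vs =>
        (produceChunk (p, es.map (IExp.eval σ.1) ++ vs.1) σ).bind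
          (fun _ σ' => .single (updsF σ'.1 xs vs.1, σ'.2) ()))
  | .star a₁ a₂ => mthen (produce a₁) (produce a₂)
  | .ite b a₁ a₂ =>
      mdchoice (mthen (assumeB b) (produce a₁)) (mthen (assumeB (.not b)) (produce a₂))

theorem Outcome.sat_bind {S A S' B : Type} (φ : Outcome S A) (C : A → S → Outcome S' B)
    (Q : S' → B → Prop) :
    (φ.bind C).sat Q ↔ φ.sat (fun σ a => (C a σ).sat Q) := by
  induction φ with
  | single σ a => rfl
  | demonic I f ih => exact forall_congr' fun i => ih i
  | angelic I f ih => exact exists_congr fun i => ih i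

/-- Key lemma: a successful consumption of `a` yields a post-store `s₁` and a consumed
sub-heap `hc`, and producing `a` from the same store on any heap has a branch reaching
post-store `s₁` with heap extended by `hc`. -/
theorem consume_produce_mirror {V P : Type} [DecidableEq V] [DecidableEq P]
    (a : Assn V P) :
    ∀ (s : V → ℤ) (h : Heap P) (Q : SCState V P → Unit → Prop),
    (consume a (s, h)).sat Q →
    ∃ (s₁ : V → ℤ) (hc : Heap P), hc ≤ h ∧ Q (s₁, h - hc) () ∧
      ∀ (h' : Heap P) (R : SCState V P → Unit → Prop),
        (produce a (s, h')).sat R → R (s₁, h' + hc) () := by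
  induction a with
  | bexp b =>
    intro s h Q hsat
    obtain ⟨⟨hb⟩, hQ⟩ := hsat
    refine ⟨s, 0, zero_le, by simpa [Outcome.sat] using hQ, ?_⟩
    intro h' R hR
    simpa [Outcome.sat] using hR ⟨hb⟩
  | pred p es xs =>
    intro s h Q hsat
    obtain ⟨vs, hvs⟩ := hsat
    obtain ⟨⟨hle⟩, hQ⟩ := hvs
    refine ⟨updsF s xs vs.1, (p, es.map (IExp.eval s) ++ vs.1) ::ₘ 0, by simpa using hle,
      hQ, ?_⟩
    intro h' R hR
    exact hR vs
  | star a₁ a₂ ih₁ ih₂ =>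
    intro s h Q hsat
    rw [show consume (a₁.star a₂) = mthen (consume a₁) (consume a₂) from rfl,
      mthen, Outcome.sat_bind] at hsat
    obtain ⟨s₁, hc₁, hle₁, hQ₁, hm₁⟩ := ih₁ s h _ hsat
    obtain ⟨s₂, hc₂, hle₂, hQ₂, hm₂⟩ := ih₂ s₁ (h - hc₁) _ hQ₁
    refine ⟨s₂, hc₁ + hc₂, ?_, ?_, ?_⟩
    · calc hc₁ + hc₂ ≤ hc₁ + (h - hc₁) := add_le_add_right hle₂ _
        _ = h := add_tsub_cancel_of_le hle₁
    · rwa [← tsub_tsub]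
    · intro h' R hR
      rw [show produce (a₁.star a₂) = mthen (produce a₁) (produce a₂) from rfl,
        mthen, Outcome.sat_bind] at hR
      have := hm₂ (h' + hc₁) R (hm₁ h' _ hR)
      rwa [add_assoc] at this
  | ite b a₁ a₂ ih₁ ih₂ =>
    intro s h Q hsat
    by_cases hb : b.eval s = true
    · have h₁ : (mthen (assumeB b) (consume a₁) (s, h)).sat Q := hsat true
      rw [mthen, Outcome.sat_bind] at h₁
      obtain ⟨s₁, hc, hle, hQ, hm⟩ := ih₁ s h Q (h₁ ⟨hb⟩)
      refine ⟨s₁, hc, hle, hQ, ?_⟩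
      intro h' R hR
      have hR₁ : (mthen (assumeB b) (produce a₁) (s, h')).sat R := hR true
      rw [mthen, Outcome.sat_bind] at hR₁
      exact hm h' R (hR₁ ⟨hb⟩)
    · have hnb : (BExp.not b).eval s = true := by
        simp only [BExp.eval, Bool.not_eq_true']
        exact Bool.eq_false_iff.mpr hb
      have h₂ : (mthen (assumeB b.not) (consume a₂) (s, h)).sat Q := hsat false
      rw [mthen, Outcome.sat_bind] at h₂
      obtain ⟨s₁, hc, hle, hQ, hm⟩ := ih₂ s h Q (h₂ ⟨hnb⟩)
      refine ⟨s₁, hc, hle, hQ, ?_⟩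
      intro h' R hR
      have hR₂ : (mthen (assumeB b.not) (produce a₂) (s, h')).sat R := hR false
      rw [mthen, Outcome.sat_bind] at hR₂
      exact hm h' R (hR₂ ⟨hnb⟩)

/-- consumption followed by production, with post-stores: consuming `a`
and then producing `a` from the same store `s` and running `C` on the two resulting
post-stores safely approximates (covers) leaving the state unchanged and angelically
picking one store used for both parameters of `C`. -/
theorem consume_then_produce_post_stores {V P A : Type} [DecidableEq V] [DecidableEq P]
    (a : Assn V P) (s : V → ℤ)
    (C : (V → ℤ) → (V → ℤ) → SCState V P → Outcome (SCState V P) A) :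
    mcover
      (fun σ => (withS s (mthen (consume a) storeM) σ).bind (fun s₁ σ₁ =>
        (withS s (mthen (produce a) storeM) σ₁).bind (fun s₂ σ₂ => C s₁ s₂ σ₂)))
      (fun σ => .angelic (V → ℤ) (fun s' => C s' s' σ)) := by
  rintro ⟨s₀, h⟩ Q hsat
  simp only [withS, mthen, storeM, Outcome.sat_bind, Outcome.bind, Outcome.sat] at hsat
  obtain ⟨s₁, hc, hle, hQ, hm⟩ := consume_produce_mirror a s h _ hsat
  have := hm (h - hc) _ hQ
  rw [tsub_add_cancel_of_le hle] at this
  exact ⟨s₁, this⟩
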